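/- There is no set A ⊆ ℤ³ with |A| = 5 such that |π₁(A)| = |π₂(A)| = |π₃(A)| = 3, where πᵢ denotes the projection of ℤ³ onto the i-th coordinate hyperplane (forgetting the i-th coordinate). -/
import Mathlib


/-- The projection of `ℤ³` onto the `i`-th coordinate plane: it deletes the `i`-th
coordinate of a vector. -/
def proj3 {α : Type*} (i : Fin 3) (a : Fin 3 → α) : Fin 2 → α :=
  fun j => a (i.succAbove j)

private lemma key_arith (a b c : ℕ) (ha : 1 ≤ a) (hb : 1 ≤ b) (hab : c ≤ a * b)
    (hc : c ≤ 3) : c + 1 ≤ a + b := by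
  rcases Nat.lt_or_ge a 2 with h | h
  · interval_cases a; omega
  · rcases Nat.lt_or_ge b 2 with h' | h'
    · interval_cases b; omega
    · omega

/-- There is no set `A ⊆ ℤ³` with `|A| = 5` such that
`|π₁(A)| = |π₂(A)| = |π₃(A)| = 3`, where `πᵢ` is the projection onto the `i`-th
coordinate plane. -/
theorem no_five_point_set_with_small_projections :
    ¬ ∃ A : Finset (Fin 3 → ℤ), A.card = 5 ∧
        ∀ i : Fin 3, (A.image (proj3 i)).card = 3 := by
  rintro ⟨A, hA5, hproj⟩
  classical
  set Z : Finset ℤ := A.image (fun p => p 2) with hZdef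
  set L : ℤ → Finset (Fin 3 → ℤ) := fun t => A.filter (fun p => p 2 = t) with hLdef
  -- injectivity on layers
  have hinj : ∀ t : ℤ, ∀ p ∈ L t, ∀ q ∈ L t, p 0 = q 0 → p 1 = q 1 → p = q := by
    intro t p hp q hq h0 h1
    simp only [hLdef, Finset.mem_filter] at hp hq
    funext j
    fin_cases j
    · exact h0
    · exact h1
    · exact hp.2.trans hq.2.symm
  -- layer sums
  have hsum : ∑ t ∈ Z, (L t).card = 5 := by
    rw [← hA5]
    exact (Finset.card_eq_sum_card_fiberwise
      (fun p hp => Finset.mem_image_of_mem _ hp)).symm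
  -- generic fiberwise identity for the two "side" projections
  have hfib : ∀ (t : ℤ),
      ((A.image (proj3 1)).filter (fun q => q 1 = t)).card
        = ((L t).image (fun p => p 0)).card := by
    intro t
    apply Finset.card_bij (fun q _ => q 0)
    · intro q hq
      simp only [Finset.mem_filter, Finset.mem_image] at hq
      obtain ⟨⟨p, hp, rfl⟩, hq1⟩ := hq
      have hp2 : p 2 = t := hq1
      exact Finset.mem_image_of_mem _ (by simp [hLdef, hp, hp2])
    · intro q hq q' hq' h
      simp only [Finset.mem_filter] at hq hq'
      funext j
      fin_cases j
      · exact h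
      · exact hq.2.trans hq'.2.symm
    · intro x hx
      simp only [Finset.mem_image] at hx
      obtain ⟨p, hp, rfl⟩ := hx
      simp only [hLdef, Finset.mem_filter] at hp
      refine ⟨proj3 1 p, ?_, rfl⟩
      simp only [Finset.mem_filter, Finset.mem_image]
      exact ⟨⟨p, hp.1, rfl⟩, hp.2⟩
  have hfib' : ∀ (t : ℤ),
      ((A.image (proj3 0)).filter (fun q => q 1 = t)).card
        = ((L t).image (fun p => p 1)).card := by
    intro t
    apply Finset.card_bij (fun q _ => q 0)
    · intro q hq
      simp only [Finset.mem_filter, Finset.mem_image] at hq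
      obtain ⟨⟨p, hp, rfl⟩, hq1⟩ := hq
      have hp2 : p 2 = t := hq1
      exact Finset.mem_image_of_mem _ (by simp [hLdef, hp, hp2])
    · intro q hq q' hq' h
      simp only [Finset.mem_filter] at hq hq'
      funext j
      fin_cases j
      · exact h
      · exact hq.2.trans hq'.2.symm
    · intro x hx
      simp only [Finset.mem_image] at hx
      obtain ⟨p, hp, rfl⟩ := hx
      simp only [hLdef, Finset.mem_filter] at hp
      refine ⟨proj3 0 p, ?_, rfl⟩
      simp only [Finset.mem_filter, Finset.mem_image]
      exact ⟨⟨p, hp.1, rfl⟩, hp.2⟩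
  -- the sums of the 1-D shadow sizes
  have hmem1 : ∀ q ∈ A.image (proj3 1), q 1 ∈ Z := by
    intro q hq
    simp only [Finset.mem_image] at hq
    obtain ⟨p, hp, rfl⟩ := hq
    exact Finset.mem_image_of_mem _ hp
  have hmem0 : ∀ q ∈ A.image (proj3 0), q 1 ∈ Z := by
    intro q hq
    simp only [Finset.mem_image] at hq
    obtain ⟨p, hp, rfl⟩ := hq
    exact Finset.mem_image_of_mem _ hp
  have hsa : ∑ t ∈ Z, ((L t).image (fun p => p 0)).card = 3 := by
    have h := hproj 1
    rw [Finset.card_eq_sum_card_fiberwise hmem1] at h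
    exact (Finset.sum_congr rfl (fun t _ => (hfib t).symm)).trans h
  have hsb : ∑ t ∈ Z, ((L t).image (fun p => p 1)).card = 3 := by
    have h := hproj 0
    rw [Finset.card_eq_sum_card_fiberwise hmem0] at h
    exact (Finset.sum_congr rfl (fun t _ => (hfib' t).symm)).trans h
  -- each layer has at most 3 points
  have h3 : ∀ t : ℤ, (L t).card ≤ 3 := by
    intro t
    have hcard : ((L t).image (proj3 2)).card = (L t).card :=
      Finset.card_image_of_injOn (fun p hp q hq h => by
        have h0 : p 0 = q 0 := congrFun h 0
        have h1 : p 1 = q 1 := congrFun h 1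
        exact hinj t p hp q hq h0 h1)
    calc (L t).card = ((L t).image (proj3 2)).card := hcard.symm
      _ ≤ (A.image (proj3 2)).card :=
          Finset.card_le_card (Finset.image_subset_image (Finset.filter_subset _ _))
      _ = 3 := hproj 2
  -- layer size bounded by product of shadows
  have hprod : ∀ t : ℤ, (L t).card ≤
      ((L t).image (fun p => p 0)).card * ((L t).image (fun p => p 1)).card := by
    intro t
    have hcard : ((L t).image (fun p => (p 0, p 1))).card = (L t).card :=
      Finset.card_image_of_injOn (fun p hp q hq h => by
        have h0 : p 0 = q 0 := congrArg Prod.fst h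
        have h1 : p 1 = q 1 := congrArg Prod.snd h
        exact hinj t p hp q hq h0 h1)
    calc (L t).card = ((L t).image (fun p => (p 0, p 1))).card := hcard.symm
      _ ≤ (((L t).image (fun p => p 0)) ×ˢ ((L t).image (fun p => p 1))).card := by
          apply Finset.card_le_card
          intro x hx
          simp only [Finset.mem_image] at hx
          obtain ⟨p, hp, rfl⟩ := hx
          exact Finset.mem_product.2
            ⟨Finset.mem_image_of_mem _ hp, Finset.mem_image_of_mem _ hp⟩
      _ = _ := Finset.card_product _ _
  -- shadows are nonempty
  have hpos : ∀ t ∈ Z, 1 ≤ ((L t).image (fun p => p 0)).card ∧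
      1 ≤ ((L t).image (fun p => p 1)).card := by
    intro t ht
    simp only [hZdef, Finset.mem_image] at ht
    obtain ⟨p, hp, hp2⟩ := ht
    have hpL : p ∈ L t := by simp [hLdef, hp, hp2]
    constructor <;>
      exact Finset.card_pos.2 ⟨_, Finset.mem_image_of_mem _ hpL⟩
  -- put it together
  have hstep : ∑ t ∈ Z, ((L t).card + 1) ≤
      ∑ t ∈ Z, (((L t).image (fun p => p 0)).card + ((L t).image (fun p => p 1)).card) := by
    apply Finset.sum_le_sum
    intro t ht
    exact key_arith _ _ _ (hpos t ht).1 (hpos t ht).2 (hprod t) (h3 t)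
  rw [Finset.sum_add_distrib, Finset.sum_add_distrib, hsum, hsa, hsb,
    Finset.sum_const, smul_eq_mul, mul_one] at hstep
  -- 5 + Z.card ≤ 6, so Z.card ≤ 1; Z nonempty so Z.card = 1
  have hZne : Z.Nonempty := by
    have : A.Nonempty := Finset.card_pos.1 (by rw [hA5]; decide)
    exact this.image _
  clear hinj hfib hfib' hmem1 hmem0 hsa hsb hprod hpos hproj hZdef hLdef
  clear_value Z L
  have hZ1 : Z.card = 1 := by
    have := Finset.card_pos.2 hZne
    omega
  obtain ⟨t₀, ht₀⟩ := Finset.card_eq_one.1 hZ1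
  rw [ht₀, Finset.sum_singleton] at hsum
  have := h3 t₀
  omega
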